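/- (Convergence of the asynchronous relaxed nonstationary multisplitting method.) Let A ∈ ℝ^{n×n} be an H₊-matrix, let D be its diagonal part and B = D − A, and set θ = ρ(D⁻¹B). Let ω ∈ (0, 2/(1+θ)). For i = 1, …, m, let A = M_i − N_i be splittings with ⟨A⟩ ≤ ⟨M_i⟩ − |N_i| entrywise. Let x* ∈ ℝⁿ be a solution of LCP(A, f). For each k ∈ ℕ let J(k) ⊆ {1, …, m} be nonempty and let s₁(k), …, s_m(k) ∈ ℕ satisfy: (1) s_i(k) ≤ k for all i and k; (2) lim_{k→∞} s_i(k) = ∞ for all i; (3) for each i, the set {k : i ∈ J(k)} is unbounded. Let η = θ / (Σ_{i=1}^m ‖E_i‖), and suppose q̃ is a positive integer such that ‖(⟨M_i⟩⁻¹|N_i|)^q‖ ≤ η for all q ≥ q̃ and all i = 1, …, m, where ‖·‖ is the matrix ∞-norm; let integers q(i,k) ≥ q̃ be given for all i and k. For each k and each i ∈ {1, …, m}, let E_{i,l}^{(k)} (i = 1, …, m) be nonnegative diagonal matrices with Σ_{i=1}^m E_{i,l}^{(k)} = I for each l ∈ J(k). Define sequences x^{k,l} ∈ ℝⁿ (l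 = 1, …, m) by x^{0,l} = x⁰ for all l, and for each k: for each i, set y^{i,0} = x^{s_i(k),i} and for v = 1, …, q(i,k) let y^{i,v} solve LCP(M_i, f + N_i y^{i,v−1}); then x^{k+1,l} = x^{k,l} if l ∉ J(k), and x^{k+1,l} = ω Σ_{i=1}^m E_{i,l}^{(k)} y^{i,q(i,k)} + (1−ω) x^{k,l} if l ∈ J(k). Then for each l, the sequence {x^{k,l}}_{k∈ℕ} converges to x* as k → ∞. -/

import Mathlib

open Matrix Filter

noncomputable section

/-- Comparison matrix `⟨A⟩`: `α_ii = |a_ii|`, `α_ij = -|a_ij|` for `i ≠ j`. -/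
def cmpMat {n : ℕ} (A : Matrix (Fin n) (Fin n) ℝ) : Matrix (Fin n) (Fin n) ℝ :=
  Matrix.of fun i j => if i = j then |A i j| else -|A i j|

/-- Entrywise absolute value of a matrix. -/
def absMat {n : ℕ} (A : Matrix (Fin n) (Fin n) ℝ) : Matrix (Fin n) (Fin n) ℝ :=
  Matrix.of fun i j => |A i j|

/-- `A` is an M-matrix: nonpositive off-diagonal entries, nonsingular,
and entrywise nonnegative inverse. -/
def IsMMat {n : ℕ} (A : Matrix (Fin n) (Fin n) ℝ) : Prop :=
  (∀ i j, i ≠ j → A i j ≤ 0) ∧ IsUnit A.det ∧ ∀ i j, 0 ≤ A⁻¹ i j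

/-- `A` is an H-matrix: its comparison matrix is an M-matrix. -/
def IsHMat {n : ℕ} (A : Matrix (Fin n) (Fin n) ℝ) : Prop := IsMMat (cmpMat A)

/-- `A` is an H₊-matrix: an H-matrix with positive diagonal entries. -/
def IsHpMat {n : ℕ} (A : Matrix (Fin n) (Fin n) ℝ) : Prop :=
  IsHMat A ∧ ∀ i, 0 < A i i

/-- Spectral radius of a real matrix: supremum of moduli of its complex eigenvalues. -/
def specRad {n : ℕ} (A : Matrix (Fin n) (Fin n) ℝ) : ℝ :=
  sSup {r : ℝ | ∃ μ : ℂ, μ ∈ spectrum ℂ (A.map Complex.ofReal) ∧ r = ‖μ‖}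

/-- Matrix ∞-norm: maximum absolute row sum. -/
def infNorm {n : ℕ} (A : Matrix (Fin n) (Fin n) ℝ) : ℝ :=
  ⨆ i, ∑ j, |A i j|

/-- `x` solves the linear complementarity problem LCP(A, f):
`x ≥ 0`, `Ax - f ≥ 0`, `xᵀ(Ax - f) = 0`. -/
def SolvesLCP {n : ℕ} (A : Matrix (Fin n) (Fin n) ℝ) (f x : Fin n → ℝ) : Prop :=
  (∀ j, 0 ≤ x j) ∧ (∀ j, f j ≤ (A *ᵥ x) j) ∧ ∑ j, x j * ((A *ᵥ x) j - f j) = 0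

end

/-!
An eigenvector `v` of `D⁻¹B` for an eigenvalue `|μ| ≥ 1` has `⟨A⟩|v| ≤ 0`, so `⟨A⟩⁻¹ ≥ 0`
forces `v = 0` and `θ < 1`; and a vector `u > 0` with `⟨A⟩u > 0` also has `⟨M_i⟩u > 0`, so
every `⟨M_i⟩` is an M-matrix. Two LCP solutions with matrix `M_i` satisfy
`⟨M_i⟩|y' - z'| ≤ |g - h|`, so each inner LCP solve shrinks the error entrywise by
`⟨M_i⟩⁻¹|N_i|`, and `q(i,k) ≥ q̃` solves shrink its sup norm by `η ≤ θ`. The relaxed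
combination then gives `e(k+1,l) ≤ ωθ · max_i e(s_i(k),i) + |1 - ω| e(k,l)` for the errors
`e(k,l) = ‖x^{k,l} - x*‖`, where `ωθ + |1 - ω| < 1` because `0 < ω < 2/(1+θ)`. As the
delays `s_i(k)` tend to infinity and every component is updated infinitely often, a uniform
bound on all errors is eventually improved by this factor, again and again.
-/

open Topology

section NonnegMatrix

variable {ι : Type*} [Fintype ι]

lemma mulVec_le_mulVec_of_nonneg {X : Matrix ι ι ℝ} (hX : ∀ p q, 0 ≤ X p q) {u v : ι → ℝ}
    (huv : u ≤ v) : X *ᵥ u ≤ X *ᵥ v :=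
  fun p => dotProduct_le_dotProduct_of_nonneg_left huv (hX p)

lemma mul_apply_nonneg {X Y : Matrix ι ι ℝ} (hX : ∀ p q, 0 ≤ X p q) (hY : ∀ p q, 0 ≤ Y p q)
    (p q : ι) : 0 ≤ (X * Y) p q :=
  Finset.sum_nonneg fun r _ => mul_nonneg (hX p r) (hY r q)

lemma le_of_mulVec_le_of_inv_nonneg [DecidableEq ι] {Y : Matrix ι ι ℝ} (hY : IsUnit Y.det)
    (hinv : ∀ p q, 0 ≤ Y⁻¹ p q) {v w : ι → ℝ} (h : Y *ᵥ v ≤ Y *ᵥ w) : v ≤ w := by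
  have := mulVec_le_mulVec_of_nonneg hinv h
  rwa [mulVec_mulVec, mulVec_mulVec, nonsing_inv_mul _ hY, one_mulVec, one_mulVec] at this

end NonnegMatrix

section Norms

variable {n : ℕ}

lemma sum_abs_le_infNorm (X : Matrix (Fin n) (Fin n) ℝ) (p : Fin n) :
    ∑ r, |X p r| ≤ infNorm X :=
  le_ciSup (f := fun p => ∑ r, |X p r|) (Set.finite_range _).bddAbove p

lemma abs_mulVec_le (X : Matrix (Fin n) (Fin n) ℝ) (v : Fin n → ℝ) :
    |X *ᵥ v| ≤ absMat X *ᵥ |v| := fun p => by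
  simpa [mulVec, dotProduct, absMat, abs_mul] using
    Finset.abs_sum_le_sum_abs (fun r => X p r * v r) Finset.univ

lemma norm_le_infNorm_mul_of_abs_le {X : Matrix (Fin n) (Fin n) ℝ} {v w : Fin n → ℝ}
    (h : |w| ≤ X *ᵥ |v|) : ‖w‖ ≤ infNorm X * ‖v‖ := by
  have hX : 0 ≤ infNorm X := Real.iSup_nonneg fun p => Finset.sum_nonneg fun r _ => abs_nonneg _
  refine (pi_norm_le_iff_of_nonneg (mul_nonneg hX (norm_nonneg v))).2 fun p => ?_
  calc ‖w p‖ = |w| p := rfl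
    _ ≤ ∑ r, X p r * |v r| := h p
    _ ≤ ∑ r, |X p r| * ‖v‖ := by
      refine Finset.sum_le_sum fun r _ => ?_
      exact mul_le_mul (le_abs_self _) (norm_le_pi_norm v r) (abs_nonneg _) (abs_nonneg _)
    _ ≤ infNorm X * ‖v‖ := by
      rw [← Finset.sum_mul]
      exact mul_le_mul_of_nonneg_right (sum_abs_le_infNorm X p) (norm_nonneg v)

end Norms

section MMatrix

variable {n : ℕ}

lemma cmpMat_apply_nonpos_of_ne (A : Matrix (Fin n) (Fin n) ℝ) {p q : Fin n} (h : p ≠ q) :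
    cmpMat A p q ≤ 0 := by
  simp [cmpMat, h]

lemma IsMMat.exists_pos_mulVec_pos {Y : Matrix (Fin n) (Fin n) ℝ} (hY : IsMMat Y) :
    ∃ u : Fin n → ℝ, (∀ p, 0 < u p) ∧ ∀ p, 0 < (Y *ᵥ u) p := by
  obtain ⟨hZ, hdet, hinv⟩ := hY
  obtain ⟨u, hYu, hu⟩ : ∃ u, Y *ᵥ u = (fun _ => 1) ∧ ∀ p, 0 ≤ u p :=
    ⟨Y⁻¹ *ᵥ fun _ => 1, by rw [mulVec_mulVec, mul_nonsing_inv _ hdet, one_mulVec],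
      fun p => dotProduct_nonneg_of_nonneg (hinv p) fun _ => zero_le_one⟩
  refine ⟨u, fun p => (hu p).lt_of_ne' fun hup => ?_, fun p => by simp [hYu]⟩
  -- with `u p = 0` every term of `(Y *ᵥ u) p` is nonpositive, but that row sums to `1`
  have hrow : (Y *ᵥ u) p ≤ 0 := by
    simp only [mulVec, dotProduct]
    refine Finset.sum_nonpos fun r _ => ?_
    rcases eq_or_ne p r with rfl | hpr
    · simp [hup]
    · exact mul_nonpos_of_nonpos_of_nonneg (hZ p r hpr) (hu r)
  norm_num [hYu] at hrow

lemma nonneg_of_mulVec_nonneg {Y : Matrix (Fin n) (Fin n) ℝ} (hZ : ∀ p q, p ≠ q → Y p q ≤ 0)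
    {u : Fin n → ℝ} (hu : ∀ p, 0 < u p) (hYu : ∀ p, 0 < (Y *ᵥ u) p) {v : Fin n → ℝ}
    (hYv : 0 ≤ Y *ᵥ v) : 0 ≤ v := by
  by_contra hneg
  obtain ⟨p₀, hp₀⟩ : ∃ p, v p < 0 := by simpa [Pi.le_def] using hneg
  obtain ⟨p, -, hmin⟩ :=
    Finset.exists_min_image Finset.univ (fun r => v r / u r) ⟨p₀, Finset.mem_univ _⟩
  set t := v p / u p
  have ht : t < 0 := (hmin p₀ (Finset.mem_univ _)).trans_lt (div_neg_of_neg_of_pos hp₀ (hu p₀))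
  -- minimum principle: `w := v - t • u` is nonnegative and vanishes at `p`, so the Z-sign
  -- pattern gives `(Y *ᵥ w) p ≤ 0`, whereas `Y *ᵥ w = Y *ᵥ v - t • Y *ᵥ u > 0`
  have hw : ∀ r, 0 ≤ v r - t * u r := fun r => by
    have := hmin r (Finset.mem_univ r)
    rw [le_div_iff₀ (hu r)] at this
    linarith
  have hwp : v p - t * u p = 0 := by simp [t, div_mul_cancel₀ _ (hu p).ne']
  have hle : (Y *ᵥ (v - t • u)) p ≤ 0 := by
    simp only [mulVec, dotProduct]
    refine Finset.sum_nonpos fun r _ => ?_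
    rcases eq_or_ne p r with rfl | hpr
    · simp [hwp]
    · exact mul_nonpos_of_nonpos_of_nonneg (hZ p r hpr) (hw r)
  have hgt : 0 < (Y *ᵥ (v - t • u)) p := by
    rw [mulVec_sub, mulVec_smul, Pi.sub_apply, Pi.smul_apply, smul_eq_mul]
    have hYvp : 0 ≤ (Y *ᵥ v) p := hYv p
    nlinarith [mul_pos (neg_pos.2 ht) (hYu p)]
  linarith

lemma isMMat_of_pos_mulVec_pos {Y : Matrix (Fin n) (Fin n) ℝ} (hZ : ∀ p q, p ≠ q → Y p q ≤ 0)
    {u : Fin n → ℝ} (hu : ∀ p, 0 < u p) (hYu : ∀ p, 0 < (Y *ᵥ u) p) : IsMMat Y := by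
  have hdet : IsUnit Y.det := by
    refine isUnit_iff_ne_zero.2 fun h0 => ?_
    obtain ⟨v, hv, hYv⟩ := exists_mulVec_eq_zero_iff.2 h0
    have hpos := nonneg_of_mulVec_nonneg hZ hu hYu hYv.ge
    have hneg := nonneg_of_mulVec_nonneg hZ hu hYu (by rw [mulVec_neg, hYv, neg_zero])
    exact hv (le_antisymm (neg_nonneg.1 hneg) hpos)
  refine ⟨hZ, hdet, fun p q => ?_⟩
  have hcol := nonneg_of_mulVec_nonneg hZ hu hYu (v := Y⁻¹ *ᵥ Pi.single q 1) (by
    rw [mulVec_mulVec, mul_nonsing_inv _ hdet, one_mulVec]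
    exact Pi.single_nonneg.2 zero_le_one)
  simpa [mulVec_single_one] using hcol p

lemma IsMMat.of_le {Y Y' : Matrix (Fin n) (Fin n) ℝ} (hY : IsMMat Y)
    (hZ : ∀ p q, p ≠ q → Y' p q ≤ 0) (hle : ∀ p q, Y p q ≤ Y' p q) : IsMMat Y' := by
  obtain ⟨u, hu, hYu⟩ := hY.exists_pos_mulVec_pos
  refine isMMat_of_pos_mulVec_pos hZ hu fun p => (hYu p).trans_le ?_
  simp only [mulVec, dotProduct]
  exact Finset.sum_le_sum fun r _ => mul_le_mul_of_nonneg_right (hle p r) (hu r).le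

end MMatrix

section SpectralRadius

variable {n : ℕ}

lemma inv_diagonal_of_ne_zero {d : Fin n → ℝ} (hd : ∀ p, d p ≠ 0) :
    (diagonal d)⁻¹ = diagonal fun p => (d p)⁻¹ :=
  inv_eq_left_inv <| by simp [diagonal_mul_diagonal, hd]

noncomputable def jacobiMat (A : Matrix (Fin n) (Fin n) ℝ) : Matrix (Fin n) (Fin n) ℝ :=
  (diagonal fun p => A p p)⁻¹ * (diagonal (fun p => A p p) - A)

lemma specRad_nonneg (X : Matrix (Fin n) (Fin n) ℝ) : 0 ≤ specRad X :=
  Real.sSup_nonneg <| by rintro _ ⟨μ, -, rfl⟩; exact norm_nonneg μ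

lemma specRad_lt_one {X : Matrix (Fin n) (Fin n) ℝ}
    (h : ∀ μ ∈ spectrum ℂ (X.map Complex.ofReal), ‖μ‖ < 1) : specRad X < 1 := by
  unfold specRad
  set S := {r : ℝ | ∃ μ : ℂ, μ ∈ spectrum ℂ (X.map Complex.ofReal) ∧ r = ‖μ‖}
  rcases S.eq_empty_or_nonempty with hS | hS
  · simp [hS]
  have hfin : S.Finite := ((finite_spectrum _).image (‖·‖)).subset <| by
    rintro _ ⟨μ, hμ, rfl⟩; exact ⟨μ, hμ, rfl⟩
  exact (hfin.csSup_lt_iff hS).2 <| by rintro _ ⟨μ, hμ, rfl⟩; exact h μ hμ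

lemma cmpMat_eq_diagonal_sub_mul_absMat_jacobiMat {A : Matrix (Fin n) (Fin n) ℝ}
    (hd : ∀ p, 0 < A p p) :
    cmpMat A = diagonal (fun p => A p p) - diagonal (fun p => A p p) * absMat (jacobiMat A) := by
  ext p q
  rcases eq_or_ne p q with rfl | hpq
  · simp [cmpMat, absMat, jacobiMat, inv_diagonal_of_ne_zero fun p => (hd p).ne', abs_of_pos (hd p)]
  · simp [cmpMat, absMat, jacobiMat, inv_diagonal_of_ne_zero fun p => (hd p).ne', hpq, abs_mul,
      abs_of_pos (hd p), (hd p).ne']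

lemma norm_lt_one_of_mem_spectrum_jacobiMat {A : Matrix (Fin n) (Fin n) ℝ} (hA : IsHpMat A)
    {μ : ℂ} (hμ : μ ∈ spectrum ℂ ((jacobiMat A).map Complex.ofReal)) : ‖μ‖ < 1 := by
  obtain ⟨⟨-, hdet, hinv⟩, hd⟩ := hA
  by_contra! hge
  rw [← spectrum_toLin', ← Module.End.hasEigenvalue_iff_mem_spectrum] at hμ
  obtain ⟨v, hv⟩ := hμ.exists_hasEigenvector
  have hJv : (jacobiMat A).map Complex.ofReal *ᵥ v = μ • v := by
    rw [← toLin'_apply]; exact hv.apply_eq_smul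
  set w : Fin n → ℝ := fun p => ‖v p‖
  have hw : 0 ≤ w := fun p => norm_nonneg _
  have hwJw : w ≤ absMat (jacobiMat A) *ᵥ w := fun p => by
    calc w p ≤ ‖μ‖ * w p := le_mul_of_one_le_left (hw p) hge
      _ = ‖((jacobiMat A).map Complex.ofReal *ᵥ v) p‖ := by simp [hJv, w]
      _ ≤ (absMat (jacobiMat A) *ᵥ w) p := by
        simpa [mulVec, dotProduct, absMat, w] using
          norm_sum_le Finset.univ fun q => (jacobiMat A p q : ℂ) * v q
  -- `⟨A⟩ w = D (w - |D⁻¹B| w) ≤ 0`, and `⟨A⟩⁻¹ ≥ 0` forces `w ≤ 0`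
  have hAw : cmpMat A *ᵥ w ≤ cmpMat A *ᵥ 0 := fun p => by
    rw [cmpMat_eq_diagonal_sub_mul_absMat_jacobiMat hd, sub_mulVec, ← mulVec_mulVec]
    simpa [mulVec_diagonal, -mulVec_mulVec] using mul_le_mul_of_nonneg_left (hwJw p) (hd p).le
  have hw0 : w ≤ 0 := le_of_mulVec_le_of_inv_nonneg hdet hinv hAw
  exact hv.2 (funext fun p => norm_le_zero_iff.1 (hw0 p))

lemma specRad_jacobiMat_lt_one {A : Matrix (Fin n) (Fin n) ℝ} (hA : IsHpMat A) :
    specRad (jacobiMat A) < 1 :=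
  specRad_lt_one fun _ => norm_lt_one_of_mem_spectrum_jacobiMat hA

end SpectralRadius

section LCP

variable {n : ℕ}

lemma SolvesLCP.mul_sub_eq_zero {M : Matrix (Fin n) (Fin n) ℝ} {g x : Fin n → ℝ}
    (hx : SolvesLCP M g x) (p : Fin n) : x p * ((M *ᵥ x) p - g p) = 0 :=
  (Finset.sum_eq_zero_iff_of_nonneg fun r _ => mul_nonneg (hx.1 r) (sub_nonneg.2 (hx.2.1 r))).1
    hx.2.2 p (Finset.mem_univ p)

lemma SolvesLCP.sub_mul_sub_le {M : Matrix (Fin n) (Fin n) ℝ} {g h y z : Fin n → ℝ}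
    (hy : SolvesLCP M g y) (hz : SolvesLCP M h z) (p : Fin n) :
    (y p - z p) * ((M *ᵥ y) p - (M *ᵥ z) p) ≤ (y p - z p) * (g p - h p) := by
  have hyz := mul_nonneg (hy.1 p) (sub_nonneg.2 (hz.2.1 p))
  have hzy := mul_nonneg (hz.1 p) (sub_nonneg.2 (hy.2.1 p))
  linarith [hy.mul_sub_eq_zero p, hz.mul_sub_eq_zero p]

lemma SolvesLCP.of_sub {M N : Matrix (Fin n) (Fin n) ℝ} {f x : Fin n → ℝ}
    (hx : SolvesLCP (M - N) f x) : SolvesLCP M (f + N *ᵥ x) x := by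
  obtain ⟨hx0, hfeas, hcompl⟩ := hx
  simp only [sub_mulVec, Pi.sub_apply] at hfeas hcompl
  refine ⟨hx0, fun p => ?_, ?_⟩
  · simpa [le_sub_iff_add_le] using hfeas p
  · simpa [sub_sub, add_comm] using hcompl

lemma abs_mul_cmpMat_mulVec_abs_le {M : Matrix (Fin n) (Fin n) ℝ} {p : Fin n}
    (hM : 0 ≤ M p p) (d : Fin n → ℝ) : |d p| * (cmpMat M *ᵥ |d|) p ≤ d p * (M *ᵥ d) p := by
  simp only [mulVec, dotProduct, Finset.mul_sum]
  refine Finset.sum_le_sum fun r _ => ?_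
  rcases eq_or_ne p r with rfl | hpr
  · simp [cmpMat, abs_of_nonneg hM]
    nlinarith [abs_mul_abs_self (d p)]
  · have := neg_abs_le (d p * (M p r * d r))
    simp only [cmpMat, of_apply, if_neg hpr, Pi.abs_apply, abs_mul] at this ⊢
    linarith

lemma SolvesLCP.cmpMat_mulVec_abs_sub_le {M : Matrix (Fin n) (Fin n) ℝ} (hM : ∀ p, 0 ≤ M p p)
    {g h y z : Fin n → ℝ} (hy : SolvesLCP M g y) (hz : SolvesLCP M h z) :
    cmpMat M *ᵥ |y - z| ≤ |g - h| := fun p => by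
  rcases eq_or_ne (y p - z p) 0 with hp | hp
  · refine le_trans ?_ (abs_nonneg _)
    simp only [mulVec, dotProduct]
    refine Finset.sum_nonpos fun r _ => ?_
    rcases eq_or_ne p r with rfl | hpr
    · simp [hp]
    · exact mul_nonpos_of_nonpos_of_nonneg (cmpMat_apply_nonpos_of_ne M hpr) (abs_nonneg _)
  refine le_of_mul_le_mul_left ?_ (abs_pos.2 hp)
  calc |y p - z p| * (cmpMat M *ᵥ |y - z|) p ≤ (y p - z p) * (M *ᵥ (y - z)) p :=
        abs_mul_cmpMat_mulVec_abs_le (hM p) (y - z)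
    _ ≤ (y p - z p) * (g p - h p) := by rw [mulVec_sub]; exact hy.sub_mul_sub_le hz p
    _ ≤ |y p - z p| * |(g - h) p| := by rw [← abs_mul]; exact le_abs_self _

end LCP

section Multisplitting

variable {n : ℕ}

lemma SolvesLCP.abs_sub_le_mulVec {M N : Matrix (Fin n) (Fin n) ℝ} (hMM : IsMMat (cmpMat M))
    (hM : ∀ p, 0 ≤ M p p) {f y z y' z' : Fin n → ℝ} (hy : SolvesLCP M (f + N *ᵥ y) y')
    (hz : SolvesLCP M (f + N *ᵥ z) z') :
    |y' - z'| ≤ ((cmpMat M)⁻¹ * absMat N) *ᵥ |y - z| := by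
  obtain ⟨-, hdet, hinv⟩ := hMM
  apply le_of_mulVec_le_of_inv_nonneg hdet hinv
  rw [mulVec_mulVec, ← Matrix.mul_assoc, mul_nonsing_inv _ hdet, Matrix.one_mul]
  calc cmpMat M *ᵥ |y' - z'| ≤ |(f + N *ᵥ y) - (f + N *ᵥ z)| := hy.cmpMat_mulVec_abs_sub_le hM hz
    _ = |N *ᵥ (y - z)| := by rw [add_sub_add_left_eq_sub, mulVec_sub]
    _ ≤ absMat N *ᵥ |y - z| := abs_mulVec_le N (y - z)

lemma abs_sub_le_pow_mulVec_of_lcp_iterates {M N : Matrix (Fin n) (Fin n) ℝ}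
    (hMM : IsMMat (cmpMat M)) (hM : ∀ p, 0 ≤ M p p) {f z : Fin n → ℝ} {y : ℕ → Fin n → ℝ}
    {q : ℕ} (hy : ∀ v < q, SolvesLCP M (f + N *ᵥ y v) (y (v + 1)))
    (hz : SolvesLCP M (f + N *ᵥ z) z) :
    |y q - z| ≤ ((cmpMat M)⁻¹ * absMat N) ^ q *ᵥ |y 0 - z| := by
  have hP : ∀ p r, 0 ≤ ((cmpMat M)⁻¹ * absMat N) p r :=
    mul_apply_nonneg hMM.2.2 fun _ _ => abs_nonneg _
  induction q with
  | zero => rw [pow_zero, one_mulVec]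
  | succ q ih =>
    calc |y (q + 1) - z| ≤ ((cmpMat M)⁻¹ * absMat N) *ᵥ |y q - z| :=
          (hy q q.lt_succ_self).abs_sub_le_mulVec hMM hM hz
      _ ≤ ((cmpMat M)⁻¹ * absMat N) *ᵥ (((cmpMat M)⁻¹ * absMat N) ^ q *ᵥ |y 0 - z|) :=
          mulVec_le_mulVec_of_nonneg hP (ih fun v hv => hy v (hv.trans q.lt_succ_self))
      _ = ((cmpMat M)⁻¹ * absMat N) ^ (q + 1) *ᵥ |y 0 - z| := by rw [mulVec_mulVec, pow_succ']

lemma norm_sub_le_infNorm_mul_of_lcp_iterates {M N : Matrix (Fin n) (Fin n) ℝ}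
    (hMM : IsMMat (cmpMat M)) (hM : ∀ p, 0 ≤ M p p) {f z : Fin n → ℝ} {y : ℕ → Fin n → ℝ}
    {q : ℕ} (hy : ∀ v < q, SolvesLCP M (f + N *ᵥ y v) (y (v + 1)))
    (hz : SolvesLCP M (f + N *ᵥ z) z) :
    ‖y q - z‖ ≤ infNorm (((cmpMat M)⁻¹ * absMat N) ^ q) * ‖y 0 - z‖ :=
  norm_le_infNorm_mul_of_abs_le <| abs_sub_le_pow_mulVec_of_lcp_iterates hMM hM hy hz

lemma diag_nonneg_of_cmpMat_le {A M N : Matrix (Fin n) (Fin n) ℝ} (hsplit : A = M - N)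
    {p : Fin n} (hA : 0 < A p p) (hcmp : cmpMat A p p ≤ cmpMat M p p - absMat N p p) :
    0 ≤ M p p := by
  have hApp : A p p = M p p - N p p := by rw [hsplit, Matrix.sub_apply]
  simp only [cmpMat, absMat, of_apply, if_true] at hcmp
  by_contra! hM
  rw [abs_of_pos hA, abs_of_neg hM] at hcmp
  linarith [neg_le_abs (N p p)]

lemma div_sum_infNorm_le {m : ℕ} {θ : ℝ} (hθ : 0 ≤ θ) {E : Fin m → Matrix (Fin n) (Fin n) ℝ}
    (hE : ∑ i, E i = 1) : θ / ∑ i, infNorm (E i) ≤ θ := by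
  rcases isEmpty_or_nonempty (Fin n) with hn | ⟨⟨p⟩⟩
  · simpa [infNorm] using hθ
  refine div_le_self hθ ?_
  calc (1 : ℝ) = ∑ i, E i p p := by simpa [Matrix.sum_apply] using (congrFun (congrFun hE p) p).symm
    _ ≤ ∑ i, infNorm (E i) := Finset.sum_le_sum fun i _ =>
      (le_abs_self _).trans <| (Finset.single_le_sum (fun r _ => abs_nonneg (E i p r))
        (Finset.mem_univ p)).trans (sum_abs_le_infNorm (E i) p)

end Multisplitting

section Relaxation

variable {ι κ : Type*} [Fintype ι] [Fintype κ] [DecidableEq ι]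

lemma norm_sum_mulVec_le_of_diagonal {E : κ → Matrix ι ι ℝ}
    (hdiag : ∀ i p q, p ≠ q → E i p q = 0) (hnn : ∀ i p, 0 ≤ E i p p) (hsum : ∑ i, E i = 1)
    {d : κ → ι → ℝ} {b : ℝ} (hb : 0 ≤ b) (hd : ∀ i, ‖d i‖ ≤ b) : ‖∑ i, E i *ᵥ d i‖ ≤ b := by
  refine (pi_norm_le_iff_of_nonneg hb).2 fun p => ?_
  have hrow : ∀ i, (E i *ᵥ d i) p = E i p p * d i p := fun i =>
    Finset.sum_eq_single p (fun r _ hr => by simp [hdiag i p r (Ne.symm hr)]) (by simp)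
  have hone : ∑ i, E i p p = 1 := by simpa [Matrix.sum_apply] using congrFun (congrFun hsum p) p
  calc ‖(∑ i, E i *ᵥ d i) p‖ = ‖∑ i, E i p p * d i p‖ := by simp only [Finset.sum_apply, hrow]
    _ ≤ ∑ i, E i p p * b := (norm_sum_le _ _).trans <| Finset.sum_le_sum fun i _ => by
      rw [norm_mul, Real.norm_of_nonneg (hnn i p)]
      exact mul_le_mul_of_nonneg_left ((norm_le_pi_norm (d i) p).trans (hd i)) (hnn i p)
    _ = b := by rw [← Finset.sum_mul, hone, one_mul]

lemma norm_relaxed_sub_le {E : κ → Matrix ι ι ℝ} (hdiag : ∀ i p q, p ≠ q → E i p q = 0)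
    (hnn : ∀ i p, 0 ≤ E i p p) (hsum : ∑ i, E i = 1) {ω β : ℝ} (hω : 0 ≤ ω) (hβ : 0 ≤ β)
    {x x' z : ι → ℝ} {y : κ → ι → ℝ} (hx' : x' = ω • ∑ i, E i *ᵥ y i + (1 - ω) • x)
    (hy : ∀ i, ‖y i - z‖ ≤ β) : ‖x' - z‖ ≤ ω * β + |1 - ω| * ‖x - z‖ := by
  have hdecomp : x' - z = ω • ∑ i, E i *ᵥ (y i - z) + (1 - ω) • (x - z) := by
    simp only [hx', mulVec_sub, Finset.sum_sub_distrib, ← sum_mulVec, hsum, one_mulVec]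
    module
  rw [hdecomp]
  refine (norm_add_le _ _).trans ?_
  rw [norm_smul, norm_smul, Real.norm_of_nonneg hω, Real.norm_eq_abs]
  gcongr
  exact norm_sum_mulVec_le_of_diagonal hdiag hnn hsum hβ hy

lemma relaxation_factor_lt_one {θ ω : ℝ} (hθ0 : 0 ≤ θ) (hθ1 : θ < 1) (hω0 : 0 < ω)
    (hω : ω < 2 / (1 + θ)) : ω * θ + |1 - ω| < 1 := by
  rw [lt_div_iff₀ (by linarith)] at hω
  rcases le_total ω 1 with hω1 | hω1
  · rw [abs_of_nonneg (sub_nonneg.2 hω1)]; nlinarith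
  · rw [abs_of_nonpos (sub_nonpos.2 hω1)]; nlinarith

end Relaxation

section Asynchronous

variable {ι : Type*}

/-- `e k l` bounds the error of the `l`-th component at time `k`; at time `k` only the
components in `J k` are updated, from the delayed components `i` of times `s i k`. -/
structure IsAsyncContraction (e : ℕ → ι → ℝ) (J : ℕ → Finset ι) (s : ι → ℕ → ℕ) (a c : ℝ) :
    Prop where
  le_of_not_mem : ∀ k l, l ∉ J k → e (k + 1) l ≤ e k l
  le_of_mem : ∀ k l, l ∈ J k → ∀ b, 0 ≤ b → (∀ i, e (s i k) i ≤ b) →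
    e (k + 1) l ≤ a * b + c * e k l

namespace IsAsyncContraction

variable {e : ℕ → ι → ℝ} {J : ℕ → Finset ι} {s : ι → ℕ → ℕ} {a c : ℝ}

lemma le_of_le_at_zero (h : IsAsyncContraction e J s a c) (hs : ∀ i k, s i k ≤ k)
    (hc : 0 ≤ c) (hac : a + c ≤ 1) {B : ℝ} (hB : 0 ≤ B) (h0 : ∀ l, e 0 l ≤ B) :
    ∀ k l, e k l ≤ B := by
  intro k
  induction k using Nat.strong_induction_on with
  | _ k ih =>
    rcases k with _ | k
    · exact h0
    intro l
    by_cases hl : l ∈ J k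
    · calc e (k + 1) l ≤ a * B + c * e k l :=
            h.le_of_mem k l hl B hB fun i => ih _ (Nat.lt_succ_of_le (hs i k)) i
        _ ≤ a * B + c * B := by gcongr; exact ih k k.lt_succ_self l
        _ ≤ B := by nlinarith
    · exact (h.le_of_not_mem k l hl).trans (ih k k.lt_succ_self l)

lemma exists_forall_ge_le_mul [Finite ι] (h : IsAsyncContraction e J s a c)
    (hs : ∀ i, Tendsto (s i) atTop atTop) (hJ : ∀ i K, ∃ k, K ≤ k ∧ i ∈ J k) (hc : 0 ≤ c)
    {β : ℝ} (hβ : 0 ≤ β) {K : ℕ} (hK : ∀ k ≥ K, ∀ l, e k l ≤ β) :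
    ∃ K', ∀ k ≥ K', ∀ l, e k l ≤ (a + c) * β := by
  obtain ⟨K₁, hK₁⟩ : ∃ K₁, ∀ k ≥ K₁, ∀ i, K ≤ s i k :=
    eventually_atTop.1 (eventually_all.2 fun i => (hs i).eventually_ge_atTop K)
  have hupd : ∀ k ≥ max K K₁, ∀ l ∈ J k, e (k + 1) l ≤ (a + c) * β := fun k hk l hl => by
    calc e (k + 1) l ≤ a * β + c * e k l :=
          h.le_of_mem k l hl β hβ fun i => hK _ (hK₁ k (le_of_max_le_right hk) i) i
      _ ≤ (a + c) * β := by rw [add_mul]; gcongr; exact hK k (le_of_max_le_left hk) l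
  choose t ht hJt using fun l => hJ l (max K K₁)
  have hafter : ∀ l, ∀ k ≥ t l + 1, e k l ≤ (a + c) * β := fun l k hk => by
    induction k, hk using Nat.le_induction with
    | base => exact hupd _ (ht l) l (hJt l)
    | succ k hk ih =>
      by_cases hl : l ∈ J k
      · exact hupd k ((ht l).trans (by omega)) l hl
      · exact (h.le_of_not_mem k l hl).trans ih
  obtain ⟨T, hT⟩ := Finite.exists_le t
  exact ⟨T + 1, fun k hk l => hafter l k (by have := hT l; omega)⟩

lemma tendsto_zero [Finite ι] (h : IsAsyncContraction e J s a c) (hs₁ : ∀ i k, s i k ≤ k)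
    (hs₂ : ∀ i, Tendsto (s i) atTop atTop) (hJ : ∀ i K, ∃ k, K ≤ k ∧ i ∈ J k)
    (he : ∀ k l, 0 ≤ e k l) (ha : 0 ≤ a) (hc : 0 ≤ c) (hac : a + c < 1) (l : ι) :
    Tendsto (fun k => e k l) atTop (𝓝 0) := by
  have := Fintype.ofFinite ι
  have hB : 0 ≤ ∑ l, e 0 l := Finset.sum_nonneg fun l _ => he 0 l
  have hlevel : ∀ j : ℕ, ∃ K, ∀ k ≥ K, ∀ l, e k l ≤ (a + c) ^ j * ∑ l, e 0 l := by
    intro j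
    induction j with
    | zero =>
      have h0 : ∀ l, e 0 l ≤ ∑ l, e 0 l := fun l =>
        Finset.single_le_sum (fun l _ => he 0 l) (Finset.mem_univ l)
      exact ⟨0, fun k _ => by simpa using h.le_of_le_at_zero hs₁ hc hac.le hB h0 k⟩
    | succ j ih =>
      obtain ⟨K, hK⟩ := ih
      simpa [pow_succ', mul_assoc] using
        h.exists_forall_ge_le_mul hs₂ hJ hc (by positivity) hK
  refine tendsto_order.2 ⟨fun ε hε => .of_forall fun k => hε.trans_le (he k l), fun ε hε => ?_⟩
  obtain ⟨j, hj⟩ := (((tendsto_pow_atTop_nhds_zero_of_lt_one (by positivity) hac).mul_const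
    (∑ l, e 0 l)).eventually (gt_mem_nhds (by simpa using hε))).exists
  obtain ⟨K, hK⟩ := hlevel j
  exact eventually_atTop.2 ⟨K, fun k hk => (hK k hk l).trans_lt hj⟩

end IsAsyncContraction

end Asynchronous

theorem async_relaxed_nonstationary_multisplitting_converges_general {n m : ℕ}
    (A : Matrix (Fin n) (Fin n) ℝ) (f xstar : Fin n → ℝ)
    (hA : IsHpMat A)
    (θ : ℝ)
    (hθ : θ = specRad ((Matrix.diagonal fun p => A p p)⁻¹ *
      (Matrix.diagonal (fun p => A p p) - A)))
    (ω : ℝ) (hω : 0 < ω ∧ ω < 2 / (1 + θ))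
    (M N : Fin m → Matrix (Fin n) (Fin n) ℝ)
    (hsplit : ∀ i, A = M i - N i)
    (hcmp : ∀ i, ∀ p q, cmpMat A p q ≤ cmpMat (M i) p q - absMat (N i) p q)
    (hxstar : SolvesLCP A f xstar)
    (J : ℕ → Finset (Fin m))
    (s : Fin m → ℕ → ℕ)
    (hs1 : ∀ i k, s i k ≤ k)
    (hs2 : ∀ i, Filter.Tendsto (s i) Filter.atTop Filter.atTop)
    (hs3 : ∀ i, ∀ K : ℕ, ∃ k, K ≤ k ∧ i ∈ J k)
    (E : Fin m → Matrix (Fin n) (Fin n) ℝ)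
    (hEsum : ∑ i, E i = 1)
    (η : ℝ) (hη : η = θ / ∑ i, infNorm (E i))
    (qt : ℕ)
    (hnorm : ∀ i, ∀ q, qt ≤ q →
      infNorm (((cmpMat (M i))⁻¹ * absMat (N i)) ^ q) ≤ η)
    (q : Fin m → ℕ → ℕ) (hq : ∀ i k, qt ≤ q i k)
    (Ek : ℕ → Fin m → Fin m → Matrix (Fin n) (Fin n) ℝ)
    (hEkdiag : ∀ k i l, ∀ p r, p ≠ r → Ek k i l p r = 0)
    (hEknn : ∀ k i l p, 0 ≤ Ek k i l p p)
    (hEksum : ∀ k l, l ∈ J k → ∑ i, Ek k i l = 1)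
    (x : ℕ → Fin m → Fin n → ℝ)
    (y : ℕ → Fin m → ℕ → Fin n → ℝ)
    (hy0 : ∀ k i, y k i 0 = x (s i k) i)
    (hy : ∀ k i v, 1 ≤ v → v ≤ q i k →
      SolvesLCP (M i) (fun p => f p + (N i *ᵥ y k i (v - 1)) p) (y k i v))
    (hxn : ∀ k l, l ∉ J k → x (k + 1) l = x k l)
    (hxj : ∀ k l, l ∈ J k →
      x (k + 1) l = ω • (∑ i, Ek k i l *ᵥ y k i (q i k)) + (1 - ω) • x k l) :
    ∀ l, Filter.Tendsto (fun k => x k l) Filter.atTop (nhds xstar) := by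
  obtain ⟨hω0, hω2⟩ := hω
  have hθ0 : 0 ≤ θ := by rw [hθ]; exact specRad_nonneg _
  have hθ1 : θ < 1 := by rw [hθ]; exact specRad_jacobiMat_lt_one hA
  have hM : ∀ i p, 0 ≤ M i p p := fun i p =>
    diag_nonneg_of_cmpMat_le (hsplit i) (hA.2 p) (hcmp i p p)
  have hMM : ∀ i, IsMMat (cmpMat (M i)) := fun i =>
    hA.1.of_le (fun _ _ => cmpMat_apply_nonpos_of_ne _) fun p r =>
      (hcmp i p r).trans (sub_le_self _ (abs_nonneg _))
  have hinner : ∀ k i, ‖y k i (q i k) - xstar‖ ≤ θ * ‖x (s i k) i - xstar‖ := fun k i => by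
    have hxM : SolvesLCP (M i) (f + N i *ᵥ xstar) xstar := (hsplit i ▸ hxstar).of_sub
    have hyM : ∀ v < q i k, SolvesLCP (M i) (f + N i *ᵥ y k i v) (y k i (v + 1)) := fun v hv =>
      hy k i (v + 1) (by omega) hv
    calc ‖y k i (q i k) - xstar‖
        ≤ infNorm (((cmpMat (M i))⁻¹ * absMat (N i)) ^ q i k) * ‖y k i 0 - xstar‖ :=
          norm_sub_le_infNorm_mul_of_lcp_iterates (hMM i) (hM i) hyM hxM
      _ ≤ θ * ‖x (s i k) i - xstar‖ := by
          rw [hy0]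
          gcongr
          exact (hnorm i _ (hq i k)).trans (hη ▸ div_sum_infNorm_le hθ0 hEsum)
  have hcontr : IsAsyncContraction (fun k l => ‖x k l - xstar‖) J s (ω * θ) |1 - ω| := by
    refine ⟨fun k l hl => by rw [hxn k l hl], fun k l hl b hb hxb => ?_⟩
    rw [mul_assoc]
    exact norm_relaxed_sub_le (hEkdiag k · l) (hEknn k · l) (hEksum k l hl) hω0.le
      (by positivity) (hxj k l hl) fun i => (hinner k i).trans (by gcongr; exact hxb i)
  intro l
  exact tendsto_iff_norm_sub_tendsto_zero.2 <| hcontr.tendsto_zero hs1 hs2 hs3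
    (fun _ _ => norm_nonneg _) (by positivity) (abs_nonneg _)
    (relaxation_factor_lt_one hθ0 hθ1 hω0 hω2) l

/-- Theorem 3.1: convergence of the asynchronous relaxed nonstationary
multisplitting method for LCP with an H₊-matrix. -/
theorem async_relaxed_nonstationary_multisplitting_converges {n m : ℕ}
    (A : Matrix (Fin n) (Fin n) ℝ) (f xstar x0 : Fin n → ℝ)
    (hA : IsHpMat A)
    (θ : ℝ)
    (hθ : θ = specRad ((Matrix.diagonal fun p => A p p)⁻¹ *
      (Matrix.diagonal (fun p => A p p) - A)))
    (ω : ℝ) (hω : 0 < ω ∧ ω < 2 / (1 + θ))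
    (M N : Fin m → Matrix (Fin n) (Fin n) ℝ)
    (hsplit : ∀ i, A = M i - N i)
    (hcmp : ∀ i, ∀ p q, cmpMat A p q ≤ cmpMat (M i) p q - absMat (N i) p q)
    (hxstar : SolvesLCP A f xstar)
    (J : ℕ → Finset (Fin m)) (hJ : ∀ k, (J k).Nonempty)
    (s : Fin m → ℕ → ℕ)
    (hs1 : ∀ i k, s i k ≤ k)
    (hs2 : ∀ i, Filter.Tendsto (s i) Filter.atTop Filter.atTop)
    (hs3 : ∀ i, ∀ K : ℕ, ∃ k, K ≤ k ∧ i ∈ J k)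
    (E : Fin m → Matrix (Fin n) (Fin n) ℝ)
    (hEdiag : ∀ i p q, p ≠ q → E i p q = 0)
    (hEnn : ∀ i p, 0 ≤ E i p p)
    (hEsum : ∑ i, E i = 1)
    (η : ℝ) (hη : η = θ / ∑ i, infNorm (E i))
    (qt : ℕ) (hqt : 0 < qt)
    (hnorm : ∀ i, ∀ q, qt ≤ q →
      infNorm (((cmpMat (M i))⁻¹ * absMat (N i)) ^ q) ≤ η)
    (q : Fin m → ℕ → ℕ) (hq : ∀ i k, qt ≤ q i k)
    (Ek : ℕ → Fin m → Fin m → Matrix (Fin n) (Fin n) ℝ)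
    (hEkdiag : ∀ k i l, ∀ p r, p ≠ r → Ek k i l p r = 0)
    (hEknn : ∀ k i l p, 0 ≤ Ek k i l p p)
    (hEksum : ∀ k l, l ∈ J k → ∑ i, Ek k i l = 1)
    (x : ℕ → Fin m → Fin n → ℝ) (hx0 : ∀ l, x 0 l = x0)
    (y : ℕ → Fin m → ℕ → Fin n → ℝ)
    (hy0 : ∀ k i, y k i 0 = x (s i k) i)
    (hy : ∀ k i v, 1 ≤ v → v ≤ q i k →
      SolvesLCP (M i) (fun p => f p + (N i *ᵥ y k i (v - 1)) p) (y k i v))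
    (hxn : ∀ k l, l ∉ J k → x (k + 1) l = x k l)
    (hxj : ∀ k l, l ∈ J k →
      x (k + 1) l = ω • (∑ i, Ek k i l *ᵥ y k i (q i k)) + (1 - ω) • x k l) :
    ∀ l, Filter.Tendsto (fun k => x k l) Filter.atTop (nhds xstar) :=
  async_relaxed_nonstationary_multisplitting_converges_general A f xstar hA θ hθ ω hω M N hsplit
    hcmp hxstar J s hs1 hs2 hs3 E hEsum η hη qt hnorm q hq Ek hEkdiag hEknn hEksum x y hy0 hy hxn
    hxj
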